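/- Fix k ≥ 1. For graphs G and H, G ≡^{cs}ₛ H if and only if V(G) = V(H) and for every set C ⊆ V(G) with |C| < k, the families of vertex sets of connected components of G − C and H − C are the same. -/

import Mathlib

/-!
Both sides amount to: for every `C` with `|C| < k`, the graphs `G - C` and `H - C` have the same
reachability relation. Adding a common graph `F` preserves this, and whether a graph has a cutset
of size `< k` is determined by these reachability relations.

Conversely, fix `C` with `|C| < k` and a finite set `U`, pad `C` with fresh vertices to a set `C'`
of size exactly `k - 1`, and take disjoint fresh sets `A`, `B` of size `k + 1`. The test graph `F`
has a clique on `U ∪ A`, a clique on `(V(G) ∪ V(H)) \ U ∪ B`, and all edges between `A ∪ B` and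
`C'`. In `X ∪ F` no set of size `< k` other than `C'` is a cutset, and `C'` is one exactly when
`X - C` has no edge leaving `U`. So `G - C` and `H - C` have the same finite sets closed under
adjacency, hence the same reachability relation.
-/

/-- Graphs are finite sets of edges, an edge being a 2-element subset of the
vertex type `V`. -/
abbrev EGraph (V : Type) [DecidableEq V] := Finset {e : Finset V // e.card = 2}

/-- The vertex set of a graph: all endpoints of its edges (no isolated vertices). -/
def EGraph.verts {V : Type} [DecidableEq V] (G : EGraph V) : Finset V :=
  G.sup (fun e => e.1)

/-- The simple graph on `V` determined by a finite edge set. -/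
def EGraph.toSG {V : Type} [DecidableEq V] (G : EGraph V) : SimpleGraph V :=
  SimpleGraph.fromRel (fun u v => ∃ e ∈ G, e.1 = ({u, v} : Finset V))

/-- `G − C`: delete the vertices of `C` and all incident edges. -/
def EGraph.delv {V : Type} [DecidableEq V] (G : EGraph V) (C : Finset V) :
    EGraph V :=
  G.filter (fun e => ∀ v ∈ e.1, v ∉ C)

/-- The family of vertex sets of connected components of `G`. -/
def EGraph.compSets {V : Type} [DecidableEq V] (G : EGraph V) : Set (Set V) :=
  {S | ∃ v ∈ EGraph.verts G, S = {u | (EGraph.toSG G).Reachable v u}}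

/-- `G` is connected. -/
def EGraph.Conn {V : Type} [DecidableEq V] (G : EGraph V) : Prop :=
  ∀ u ∈ EGraph.verts G, ∀ v ∈ EGraph.verts G, (EGraph.toSG G).Reachable u v

/-- `C` is a cutset of `G`: either `C = ∅` and `G` is disconnected, or `C` is
nonempty and separates some pair of vertices of `G` lying in a common
component, the pair surviving the deletion of `C`. -/
def EGraph.IsCutset {V : Type} [DecidableEq V] (G : EGraph V) (C : Finset V) :
    Prop :=
  (C = ∅ ∧ ¬ EGraph.Conn G) ∨
    (C.Nonempty ∧ ∃ x ∈ EGraph.verts G, ∃ y ∈ EGraph.verts G,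
      x ∉ C ∧ y ∉ C ∧ (EGraph.toSG G).Reachable x y ∧
        ¬ (EGraph.toSG (EGraph.delv G C)).Reachable x y)

/-- `G` has a cutset of cardinality smaller than `k`. -/
def EGraph.HasSmallCutset {V : Type} [DecidableEq V] (k : ℕ) (G : EGraph V) :
    Prop :=
  ∃ C : Finset V, C.card < k ∧ EGraph.IsCutset G C

open Finset

namespace SimpleGraph

variable {V : Type}

def IsAdjClosed (Γ : SimpleGraph V) (U : Set V) : Prop :=
  ∀ ⦃u v⦄, u ∈ U → Γ.Adj u v → v ∈ U

theorem IsAdjClosed.mem_of_reachable {Γ : SimpleGraph V} {U : Set V} (hU : Γ.IsAdjClosed U)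
    {x y : V} (hx : x ∈ U) (h : Γ.Reachable x y) : y ∈ U := by
  obtain ⟨w⟩ := h
  induction w with
  | nil => exact hx
  | cons hadj _ ih => exact ih (hU hx hadj)

theorem reachable_le_of_adj_le {Γ Γ' : SimpleGraph V} (h : Γ.Adj ≤ Γ'.Reachable) :
    Γ.Reachable ≤ Γ'.Reachable := by
  rw [reachable_eq_reflTransGen]
  exact Relation.reflTransGen_le_of_equivalence_of_le Γ'.reachable_is_equivalence h

theorem reachable_sup_le_of_reachable_le {Γ Γ' Δ : SimpleGraph V}
    (h : Γ.Reachable ≤ Γ'.Reachable) : (Γ ⊔ Δ).Reachable ≤ (Γ' ⊔ Δ).Reachable :=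
  reachable_le_of_adj_le fun _ _ hadj => hadj.elim
    (fun hΓ => (h _ _ hΓ.reachable).mono le_sup_left)
    (fun hΔ => (Adj.reachable (G := Γ' ⊔ Δ) (Or.inr hΔ)))

theorem reachable_sup_eq_of_reachable_eq {Γ Γ' Δ : SimpleGraph V}
    (h : Γ.Reachable = Γ'.Reachable) : (Γ ⊔ Δ).Reachable = (Γ' ⊔ Δ).Reachable :=
  le_antisymm (reachable_sup_le_of_reachable_le h.le) (reachable_sup_le_of_reachable_le h.ge)

theorem mem_support_iff_exists_reachable {Γ : SimpleGraph V} {u : V} :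
    u ∈ Γ.support ↔ ∃ v, v ≠ u ∧ Γ.Reachable u v := by
  refine ⟨fun hu => ?_, fun ⟨v, hvu, huv⟩ => mem_support_of_reachable hvu.symm huv⟩
  obtain ⟨v, huv⟩ := Γ.mem_support.mp hu
  exact ⟨v, huv.ne.symm, huv.reachable⟩

theorem support_eq_of_reachable_eq {Γ Γ' : SimpleGraph V} (h : Γ.Reachable = Γ'.Reachable) :
    Γ.support = Γ'.support := by
  ext u
  simp only [mem_support_iff_exists_reachable, h]

end SimpleGraph

theorem Infinite.exists_finset_disjoint_card_eq {α : Type*} [Infinite α] [DecidableEq α]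
    (s : Finset α) (n : ℕ) : ∃ t : Finset α, Disjoint t s ∧ t.card = n := by
  obtain ⟨t, hst, ht⟩ := Infinite.exists_superset_card_eq s (s.card + n) (by omega)
  exact ⟨t \ s, sdiff_disjoint, by rw [card_sdiff_of_subset hst]; omega⟩

namespace EGraph

variable {V : Type} [DecidableEq V]

theorem mem_verts {X : EGraph V} {u : V} : u ∈ X.verts ↔ ∃ e ∈ X, u ∈ e.1 := by
  simp [verts, Finset.mem_sup]

theorem edge_eq_pair (e : {e : Finset V // e.card = 2}) {u v : V} (hu : u ∈ e.1) (hv : v ∈ e.1)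
    (huv : u ≠ v) : e.1 = {u, v} :=
  (eq_of_subset_of_card_le (by simp [insert_subset_iff, hu, hv]) (by rw [e.2, card_pair huv])).symm

theorem toSG_adj {X : EGraph V} {u v : V} :
    (toSG X).Adj u v ↔ u ≠ v ∧ ∃ e ∈ X, e.1 = {u, v} := by
  rw [toSG, SimpleGraph.fromRel_adj, pair_comm v u, or_self]

theorem coe_verts (X : EGraph V) : (X.verts : Set V) = (toSG X).support := by
  ext u
  simp only [mem_coe, mem_verts, SimpleGraph.mem_support, toSG_adj]
  constructor
  · rintro ⟨e, he, hu⟩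
    obtain ⟨v, hv, hvu⟩ := exists_mem_ne (by rw [e.2]; norm_num) u
    exact ⟨v, hvu.symm, e, he, edge_eq_pair e hu hv hvu.symm⟩
  · rintro ⟨v, -, e, he, hue⟩
    exact ⟨e, he, by simp [hue]⟩

theorem mem_verts_of_adj {X : EGraph V} {u v : V} (h : (toSG X).Adj u v) : u ∈ X.verts := by
  rw [← mem_coe, coe_verts]
  exact ⟨v, h⟩

theorem mem_verts_of_reachable {X : EGraph V} {u v : V} (h : (toSG X).Reachable u v)
    (huv : u ≠ v) : u ∈ X.verts := by
  rw [← mem_coe, coe_verts]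
  exact SimpleGraph.mem_support_of_reachable huv h

theorem verts_eq_of_reachable_eq {X Y : EGraph V} (h : (toSG X).Reachable = (toSG Y).Reachable) :
    X.verts = Y.verts := by
  rw [← coe_inj, coe_verts, coe_verts, SimpleGraph.support_eq_of_reachable_eq h]

theorem toSG_union (X Y : EGraph V) : toSG (X ∪ Y) = toSG X ⊔ toSG Y := by
  ext u v
  simp only [SimpleGraph.sup_adj, toSG_adj, mem_union]
  grind

theorem verts_union (X Y : EGraph V) : (X ∪ Y).verts = X.verts ∪ Y.verts :=
  sup_union

theorem toSG_delv_adj {X : EGraph V} {C : Finset V} {u v : V} :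
    (toSG (X.delv C)).Adj u v ↔ (toSG X).Adj u v ∧ u ∉ C ∧ v ∉ C := by
  simp only [toSG_adj, delv, mem_filter]
  constructor
  · rintro ⟨huv, e, ⟨he, hC⟩, hue⟩
    exact ⟨⟨huv, e, he, hue⟩, hC u (by simp [hue]), hC v (by simp [hue])⟩
  · rintro ⟨⟨huv, e, he, hue⟩, hu, hv⟩
    exact ⟨huv, e, ⟨he, by simp [hue, hu, hv]⟩, hue⟩

@[simp]
theorem delv_empty (X : EGraph V) : X.delv ∅ = X := by
  simp [delv]

theorem delv_union (X Y : EGraph V) (C : Finset V) :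
    (X ∪ Y).delv C = X.delv C ∪ Y.delv C :=
  filter_union _ _ _

theorem delv_eq_of_inter_verts_eq {X : EGraph V} {C C' : Finset V}
    (h : C ∩ X.verts = C' ∩ X.verts) : X.delv C = X.delv C' := by
  refine filter_congr fun e he => forall₂_congr fun v hv => not_congr ?_
  have hvX : v ∈ X.verts := mem_verts.mpr ⟨e, he, hv⟩
  simpa [hvX] using congrArg (v ∈ ·) h

theorem delv_inter_verts (X : EGraph V) (C : Finset V) : X.delv (C ∩ X.verts) = X.delv C :=
  delv_eq_of_inter_verts_eq (by rw [inter_assoc, inter_self])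

theorem delv_union_eq_of_disjoint {X : EGraph V} {C D : Finset V} (hD : Disjoint D X.verts) :
    X.delv (C ∪ D) = X.delv C := by
  refine delv_eq_of_inter_verts_eq ?_
  rw [union_inter_distrib_right, disjoint_iff_inter_eq_empty.mp hD, union_empty]

theorem reachable_iff_exists_mem_compSets {X : EGraph V} {x y : V} :
    (toSG X).Reachable x y ↔ x = y ∨ ∃ S ∈ compSets X, x ∈ S ∧ y ∈ S := by
  constructor
  · intro h
    rcases eq_or_ne x y with hxy | hxy
    · exact Or.inl hxy
    · exact Or.inr ⟨_, ⟨x, mem_verts_of_reachable h hxy, rfl⟩, SimpleGraph.Reachable.refl x, h⟩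
  · rintro (rfl | ⟨S, ⟨v, -, rfl⟩, hx, hy⟩)
    · rfl
    · exact hx.symm.trans hy

theorem compSets_eq_iff {X Y : EGraph V} :
    compSets X = compSets Y ↔ (toSG X).Reachable = (toSG Y).Reachable := by
  constructor
  · intro h
    ext x y
    rw [reachable_iff_exists_mem_compSets, reachable_iff_exists_mem_compSets, h]
  · intro h
    simp only [compSets, verts_eq_of_reachable_eq h, h]

theorem reachable_iff_forall_isAdjClosed {X : EGraph V} {x y : V} :
    (toSG X).Reachable x y ↔ ∀ U : Finset V, (toSG X).IsAdjClosed U → x ∈ U → y ∈ U := by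
  refine ⟨fun h U hU hx => hU.mem_of_reachable hx h, fun h => ?_⟩
  classical
  have hclosed : (toSG X).IsAdjClosed ((insert x X.verts).filter ((toSG X).Reachable x)) := by
    intro u v hu huv
    rw [mem_coe, mem_filter] at hu ⊢
    have hv : v ∈ X.verts := mem_verts_of_adj huv.symm
    exact ⟨mem_insert_of_mem hv, hu.2.trans huv.reachable⟩
  exact (mem_filter.mp (h _ hclosed (by simp))).2

theorem reachable_union_delv_eq {X Y F : EGraph V} {C : Finset V}
    (h : (toSG (X.delv C)).Reachable = (toSG (Y.delv C)).Reachable) :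
    (toSG ((X ∪ F).delv C)).Reachable = (toSG ((Y ∪ F).delv C)).Reachable := by
  rw [delv_union, delv_union, toSG_union, toSG_union]
  exact SimpleGraph.reachable_sup_eq_of_reachable_eq h

theorem isCutset_congr {X Y : EGraph V} {C : Finset V} (hv : X.verts = Y.verts)
    (h : (toSG X).Reachable = (toSG Y).Reachable)
    (hC : (toSG (X.delv C)).Reachable = (toSG (Y.delv C)).Reachable) :
    IsCutset X C ↔ IsCutset Y C := by
  rw [IsCutset, IsCutset, Conn, Conn, hv, h, hC]

theorem hasSmallCutset_congr {k : ℕ} {X Y : EGraph V}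
    (h : ∀ C : Finset V, C.card < k →
      (toSG (X.delv C)).Reachable = (toSG (Y.delv C)).Reachable) :
    HasSmallCutset k X ↔ HasSmallCutset k Y := by
  refine exists_congr fun C => and_congr_right fun hC => ?_
  have h₀ : (toSG X).Reachable = (toSG Y).Reachable := by
    simpa using h ∅ (by rw [card_empty]; omega)
  exact isCutset_congr (verts_eq_of_reachable_eq h₀) h₀ (h C hC)

theorem not_isCutset_of_forall_reachable {Y : EGraph V} {C : Finset V} {z : V}
    (h : ∀ v ∈ Y.verts, v ∉ C → (toSG (Y.delv C)).Reachable v z) : ¬ IsCutset Y C := by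
  rintro (⟨rfl, hY⟩ | ⟨-, x, hx, y, hy, hxC, hyC, -, hxy⟩)
  · refine hY fun u hu v hv => ?_
    simpa using (h u hu (notMem_empty u)).trans (h v hv (notMem_empty v)).symm
  · exact hxy ((h x hx hxC).trans (h y hy hyC).symm)

theorem isCutset_of_not_reachable {Y : EGraph V} {C : Finset V} {a b : V} (ha : a ∈ Y.verts)
    (hb : b ∈ Y.verts) (haC : a ∉ C) (hbC : b ∉ C) (hab : C.Nonempty → (toSG Y).Reachable a b)
    (hsep : ¬ (toSG (Y.delv C)).Reachable a b) : IsCutset Y C := by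
  rcases C.eq_empty_or_nonempty with rfl | hC
  · exact Or.inl ⟨rfl, fun hconn => hsep (by simpa using hconn a ha b hb)⟩
  · exact Or.inr ⟨hC, a, ha, b, hb, haC, hbC, hab hC, hsep⟩

open Classical in
noncomputable def ofSimpleGraph (Z : Finset V) (Γ : SimpleGraph V) : EGraph V :=
  ((Z.powersetCard 2).filter fun e => ∀ u ∈ e, ∀ v ∈ e, u ≠ v → Γ.Adj u v).subtype _

theorem mem_ofSimpleGraph {Z : Finset V} {Γ : SimpleGraph V} {e : {e : Finset V // e.card = 2}} :
    e ∈ ofSimpleGraph Z Γ ↔ e.1 ⊆ Z ∧ ∀ u ∈ e.1, ∀ v ∈ e.1, u ≠ v → Γ.Adj u v := by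
  simp [ofSimpleGraph, e.2]

theorem toSG_ofSimpleGraph {Z : Finset V} {Γ : SimpleGraph V} (hZ : ∀ u v, Γ.Adj u v → u ∈ Z) :
    toSG (ofSimpleGraph Z Γ) = Γ := by
  ext u v
  rw [toSG_adj]
  constructor
  · rintro ⟨huv, e, he, hue⟩
    exact (mem_ofSimpleGraph.mp he).2 u (by simp [hue]) v (by simp [hue]) huv
  · intro h
    refine ⟨h.ne, ⟨{u, v}, card_pair h.ne⟩, mem_ofSimpleGraph.mpr ⟨?_, ?_⟩, rfl⟩
    · simp [insert_subset_iff, hZ u v h, hZ v u h.symm]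
    · simp only [mem_insert, mem_singleton]
      rintro a (rfl | rfl) b (rfl | rfl) hab <;>
        first | exact absurd rfl hab | exact h | exact h.symm

theorem verts_ofSimpleGraph_subset (Z : Finset V) (Γ : SimpleGraph V) :
    (ofSimpleGraph Z Γ).verts ⊆ Z := by
  intro u hu
  obtain ⟨e, he, hue⟩ := mem_verts.mp hu
  exact (mem_ofSimpleGraph.mp he).1 hue

def testRel (W U C A B : Finset V) (u v : V) : Prop :=
  (u ∈ U ∪ A ∧ v ∈ U ∪ A) ∨ (u ∈ W \ U ∪ B ∧ v ∈ W \ U ∪ B) ∨ (u ∈ A ∪ B ∧ v ∈ C)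

noncomputable def testGraph (W U C A B : Finset V) : EGraph V :=
  ofSimpleGraph (W ∪ U ∪ C ∪ A ∪ B) (SimpleGraph.fromRel (testRel W U C A B))

section testGraph

variable {W U C A B C₀ : Finset V} {X : EGraph V} {u v : V}

theorem toSG_testGraph :
    toSG (testGraph W U C A B) = SimpleGraph.fromRel (testRel W U C A B) := by
  refine toSG_ofSimpleGraph fun u v h => ?_
  simp only [SimpleGraph.fromRel_adj, testRel, mem_union, mem_sdiff] at h ⊢
  tauto

theorem adj_union_testGraph_delv :
    (toSG ((X ∪ testGraph W U C A B).delv C₀)).Adj u v ↔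
      ((toSG X).Adj u v ∨ (u ≠ v ∧ (testRel W U C A B u v ∨ testRel W U C A B v u))) ∧
        u ∉ C₀ ∧ v ∉ C₀ := by
  rw [toSG_delv_adj, toSG_union, SimpleGraph.sup_adj, toSG_testGraph, SimpleGraph.fromRel_adj]

theorem reachable_of_testRel (h : testRel W U C A B u v) (hu : u ∉ C₀) (hv : v ∉ C₀) :
    (toSG ((X ∪ testGraph W U C A B).delv C₀)).Reachable u v := by
  by_cases huv : u = v
  · exact huv ▸ SimpleGraph.Reachable.refl u
  · exact (adj_union_testGraph_delv.mpr ⟨Or.inr ⟨huv, Or.inl h⟩, hu, hv⟩).reachable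

theorem reachable_union_testGraph_of_adj_delv (h : (toSG (X.delv C₀)).Adj u v) :
    (toSG ((X ∪ testGraph W U C A B).delv C₀)).Reachable u v := by
  obtain ⟨hX, hu, hv⟩ := toSG_delv_adj.mp h
  exact (adj_union_testGraph_delv.mpr ⟨Or.inl hX, hu, hv⟩).reachable

theorem mem_of_mem_verts_union_testGraph (hXW : X.verts ⊆ W)
    (hv : v ∈ (X ∪ testGraph W U C A B).verts) : v ∈ W ∪ U ∪ C ∪ A ∪ B := by
  rw [verts_union, mem_union] at hv
  rcases hv with hv | hv
  · simp [hXW hv]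
  · exact verts_ofSimpleGraph_subset _ _ hv

theorem reachable_union_testGraph_of_mem_cut (hXW : X.verts ⊆ W) {a b c : V} (ha : a ∈ A)
    (haC₀ : a ∉ C₀) (hb : b ∈ B) (hbC₀ : b ∉ C₀) (hc : c ∈ C) (hcC₀ : c ∉ C₀)
    (hv : v ∈ (X ∪ testGraph W U C A B).verts) (hvC₀ : v ∉ C₀) :
    (toSG ((X ∪ testGraph W U C A B).delv C₀)).Reachable v c := by
  have hac : (toSG ((X ∪ testGraph W U C A B).delv C₀)).Reachable a c :=
    reachable_of_testRel (Or.inr (Or.inr ⟨mem_union_left _ ha, hc⟩)) haC₀ hcC₀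
  have hbc : (toSG ((X ∪ testGraph W U C A B).delv C₀)).Reachable b c :=
    reachable_of_testRel (Or.inr (Or.inr ⟨mem_union_right _ hb, hc⟩)) hbC₀ hcC₀
  by_cases hvAB : v ∈ A ∪ B
  · exact reachable_of_testRel (Or.inr (Or.inr ⟨hvAB, hc⟩)) hvC₀ hcC₀
  by_cases hvC : v ∈ C
  · exact (reachable_of_testRel (Or.inr (Or.inr ⟨mem_union_left _ ha, hvC⟩)) haC₀ hvC₀).symm.trans
      hac
  by_cases hvU : v ∈ U
  · exact (reachable_of_testRel (Or.inl ⟨by simp [hvU], by simp [ha]⟩) hvC₀ haC₀).trans hac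
  · have hvW : v ∈ W := by
      have := mem_of_mem_verts_union_testGraph hXW hv
      simp_all
    exact (reachable_of_testRel (Or.inr (Or.inl ⟨by simp [hvW, hvU], by simp [hb]⟩)) hvC₀
      hbC₀).trans hbc

theorem reachable_union_testGraph_of_adj_leaving (hXW : X.verts ⊆ W) {p q a : V} (hp : p ∈ U)
    (hq : q ∉ U) (hpq : (toSG (X.delv C)).Adj p q) (ha : a ∈ A) (haC : a ∉ C)
    (hv : v ∈ (X ∪ testGraph W U C A B).verts) (hvC : v ∉ C) :
    (toSG ((X ∪ testGraph W U C A B).delv C)).Reachable v a := by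
  obtain ⟨hpqX, hpC, hqC⟩ := toSG_delv_adj.mp hpq
  have hqW : q ∈ W := hXW (mem_verts_of_adj hpqX.symm)
  have hqa : (toSG ((X ∪ testGraph W U C A B).delv C)).Reachable q a :=
    (reachable_union_testGraph_of_adj_delv hpq).symm.trans
      (reachable_of_testRel (Or.inl ⟨by simp [hp], by simp [ha]⟩) hpC haC)
  by_cases hvUA : v ∈ U ∪ A
  · exact reachable_of_testRel (Or.inl ⟨hvUA, by simp [ha]⟩) hvC haC
  · have hv₂ : v ∈ W \ U ∪ B := by
      have := mem_of_mem_verts_union_testGraph hXW hv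
      simp only [mem_union, mem_sdiff] at this hvUA ⊢
      tauto
    exact (reachable_of_testRel (Or.inr (Or.inl ⟨hv₂, by simp [hqW, hq]⟩)) hvC hqC).trans hqa

theorem not_reachable_union_testGraph_of_isAdjClosed (hXW : X.verts ⊆ W) (hAW : Disjoint A W)
    (hB : Disjoint B (U ∪ A)) (hU : (toSG (X.delv C)).IsAdjClosed U) {a b : V} (ha : a ∈ A)
    (hb : b ∈ B) : ¬ (toSG ((X ∪ testGraph W U C A B).delv C)).Reachable a b := by
  have hsides : Disjoint (U ∪ A) (W \ U ∪ B) := by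
    rw [disjoint_union_right]
    exact ⟨disjoint_union_left.mpr ⟨disjoint_sdiff, (hAW.mono_right sdiff_subset)⟩, hB.symm⟩
  have hclosed : (toSG ((X ∪ testGraph W U C A B).delv C)).IsAdjClosed ↑(U ∪ A) := by
    intro x y hx hxy
    rw [mem_coe] at hx ⊢
    obtain ⟨hX | ⟨-, hr | hr⟩, hxC, hyC⟩ := adj_union_testGraph_delv.mp hxy
    · have hxU : x ∈ U := by
        rcases mem_union.mp hx with hxU | hxA
        · exact hxU
        · exact absurd (hXW (mem_verts_of_adj hX)) (disjoint_left.mp hAW hxA)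
      exact mem_union_left _ (hU hxU (toSG_delv_adj.mpr ⟨hX, hxC, hyC⟩))
    · rcases hr with ⟨-, hy⟩ | ⟨hx₂, -⟩ | ⟨-, hyC'⟩
      · exact hy
      · exact absurd hx₂ (disjoint_left.mp hsides hx)
      · exact absurd hyC' hyC
    · rcases hr with ⟨hy, -⟩ | ⟨-, hx₂⟩ | ⟨-, hxC'⟩
      · exact hy
      · exact absurd hx₂ (disjoint_left.mp hsides hx)
      · exact absurd hxC' hxC
  exact fun hab => disjoint_left.mp hB hb (hclosed.mem_of_reachable (by simp [ha]) hab)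

theorem hasSmallCutset_union_testGraph_iff {k : ℕ} (hXW : X.verts ⊆ W) (hC : C.card + 1 = k)
    (hA : k < A.card) (hB : k < B.card) (hAdisj : Disjoint A (W ∪ C))
    (hBdisj : Disjoint B (U ∪ A ∪ C)) :
    HasSmallCutset k (X ∪ testGraph W U C A B) ↔ (toSG (X.delv C)).IsAdjClosed U := by
  constructor
  · rintro ⟨C₀, hC₀k, hcut⟩
    obtain ⟨a, ha, haC₀⟩ := exists_mem_notMem_of_card_lt_card (hC₀k.trans hA)
    obtain ⟨b, hb, hbC₀⟩ := exists_mem_notMem_of_card_lt_card (hC₀k.trans hB)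
    have hCC₀ : C ⊆ C₀ := fun c hc => by_contra fun hcC₀ =>
      not_isCutset_of_forall_reachable
        (fun v hv hvC₀ => reachable_union_testGraph_of_mem_cut hXW ha haC₀ hb hbC₀ hc hcC₀ hv hvC₀)
        hcut
    obtain rfl : C = C₀ := eq_of_subset_of_card_le hCC₀ (by omega)
    intro p q hp hpq
    by_contra hq
    exact not_isCutset_of_forall_reachable
      (fun v hv hvC => reachable_union_testGraph_of_adj_leaving hXW hp hq hpq ha haC₀ hv hvC) hcut
  · intro hU
    obtain ⟨a, ha, haC⟩ := exists_mem_notMem_of_card_lt_card (show C.card < A.card by omega)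
    obtain ⟨b, hb, hbC⟩ := exists_mem_notMem_of_card_lt_card (show C.card < B.card by omega)
    have hreach {u v : V} (h : testRel W U C A B u v) :
        (toSG (X ∪ testGraph W U C A B)).Reachable u v := by
      simpa using reachable_of_testRel (X := X) (C₀ := ∅) h (notMem_empty u) (notMem_empty v)
    have hverts {x : V} {S : Finset V} (hS : 1 < S.card) (hxS : x ∈ S)
        (hside : ∀ y ∈ S, testRel W U C A B x y) : x ∈ (X ∪ testGraph W U C A B).verts := by
      obtain ⟨y, hy, hyx⟩ := exists_mem_ne hS x
      exact mem_verts_of_reachable (hreach (hside y hy)) hyx.symm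
    refine ⟨C, by omega, isCutset_of_not_reachable ?_ ?_ haC hbC ?_
      (not_reachable_union_testGraph_of_isAdjClosed hXW (hAdisj.mono_right subset_union_left)
        (hBdisj.mono_right subset_union_left) hU ha hb)⟩
    · exact hverts (S := A) (by omega) ha fun y hy => Or.inl ⟨by simp [ha], by simp [hy]⟩
    · exact hverts (S := B) (by omega) hb fun y hy => Or.inr (Or.inl ⟨by simp [hb], by simp [hy]⟩)
    · rintro ⟨c, hc⟩
      exact (hreach (Or.inr (Or.inr ⟨by simp [ha], hc⟩))).trans
        (hreach (Or.inr (Or.inr ⟨by simp [hb], hc⟩))).symm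

end testGraph

theorem isAdjClosed_delv_iff_of_forall_hasSmallCutset_union [Infinite V] {k : ℕ}
    {G H : EGraph V} (h : ∀ F : EGraph V, HasSmallCutset k (G ∪ F) ↔ HasSmallCutset k (H ∪ F))
    {C : Finset V} (hC : C.card < k) (U : Finset V) :
    (toSG (G.delv C)).IsAdjClosed U ↔ (toSG (H.delv C)).IsAdjClosed U := by
  set W := G.verts ∪ H.verts
  obtain ⟨D, hDW, hD⟩ := Infinite.exists_finset_disjoint_card_eq (W ∪ C) (k - 1 - C.card)
  obtain ⟨A, hAdisj, hA⟩ := Infinite.exists_finset_disjoint_card_eq (W ∪ (C ∪ D)) (k + 1)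
  obtain ⟨B, hBdisj, hB⟩ := Infinite.exists_finset_disjoint_card_eq (U ∪ A ∪ (C ∪ D)) (k + 1)
  have hCD : (C ∪ D).card + 1 = k := by
    rw [card_union_of_disjoint (hDW.mono_right subset_union_right).symm]
    omega
  have hDG : Disjoint D G.verts := hDW.mono_right (subset_union_left.trans subset_union_left)
  have hDH : Disjoint D H.verts := hDW.mono_right (subset_union_right.trans subset_union_left)
  have htest := h (testGraph W U (C ∪ D) A B)
  rwa [hasSmallCutset_union_testGraph_iff subset_union_left hCD (by omega) (by omega) hAdisj hBdisj,
    hasSmallCutset_union_testGraph_iff subset_union_right hCD (by omega) (by omega) hAdisj hBdisj,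
    delv_union_eq_of_disjoint hDG, delv_union_eq_of_disjoint hDH] at htest

theorem reachable_delv_eq_of_forall_hasSmallCutset_union [Infinite V] {k : ℕ} {G H : EGraph V}
    (h : ∀ F : EGraph V, HasSmallCutset k (G ∪ F) ↔ HasSmallCutset k (H ∪ F)) {C : Finset V}
    (hC : C.card < k) : (toSG (G.delv C)).Reachable = (toSG (H.delv C)).Reachable := by
  ext x y
  simp only [reachable_iff_forall_isAdjClosed,
    isAdjClosed_delv_iff_of_forall_hasSmallCutset_union h hC]

theorem verts_eq_and_compSets_delv_eq_iff {k : ℕ} (hk : 1 ≤ k) {G H : EGraph V} :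
    (G.verts = H.verts ∧ ∀ C : Finset V, C ⊆ G.verts → C.card < k →
      compSets (G.delv C) = compSets (H.delv C)) ↔
    ∀ C : Finset V, C.card < k → (toSG (G.delv C)).Reachable = (toSG (H.delv C)).Reachable := by
  constructor
  · rintro ⟨hv, hcomp⟩ C hC
    have hC' : (C ∩ G.verts).card < k := (card_le_card inter_subset_left).trans_lt hC
    rw [← delv_inter_verts G, ← delv_inter_verts H, ← hv, ← compSets_eq_iff]
    exact hcomp _ inter_subset_right hC'
  · intro h
    refine ⟨verts_eq_of_reachable_eq (by simpa using h ∅ (by rw [card_empty]; omega)),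
      fun C _ hC => compSets_eq_iff.mpr (h C hC)⟩

end EGraph

theorem stmt19_general {V : Type} [Infinite V] [DecidableEq V]
    (k : ℕ) (hk : 1 ≤ k) (G H : EGraph V) :
    (∀ F : EGraph V,
        (EGraph.HasSmallCutset k (G ∪ F) ↔ EGraph.HasSmallCutset k (H ∪ F))) ↔
      (EGraph.verts G = EGraph.verts H ∧
        ∀ C : Finset V, C ⊆ EGraph.verts G → C.card < k →
          EGraph.compSets (EGraph.delv G C) = EGraph.compSets (EGraph.delv H C)) := by
  rw [EGraph.verts_eq_and_compSets_delv_eq_iff hk]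
  exact ⟨fun h C hC => EGraph.reachable_delv_eq_of_forall_hasSmallCutset_union h hC,
    fun h F => EGraph.hasSmallCutset_congr fun C hC => EGraph.reachable_union_delv_eq (h C hC)⟩

/-- Characterization of strong equivalence with respect to possession of a
cutset of size `< k`. -/
theorem stmt19 {V : Type} [Countable V] [Infinite V] [DecidableEq V]
    (k : ℕ) (hk : 1 ≤ k) (G H : EGraph V) :
    (∀ F : EGraph V,
        (EGraph.HasSmallCutset k (G ∪ F) ↔ EGraph.HasSmallCutset k (H ∪ F))) ↔
      (EGraph.verts G = EGraph.verts H ∧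
        ∀ C : Finset V, C ⊆ EGraph.verts G → C.card < k →
          EGraph.compSets (EGraph.delv G C) = EGraph.compSets (EGraph.delv H C)) :=
  stmt19_general k hk G H
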